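/- Let M be a mixed abelian category, heart of a bounded t-structure on a triangulated category D satisfying the mixedness condition Hom^i_D(L,L') = 0 for simple L,L' with wt(L') > wt(L) - i. If X is an object of M with weights <= n and Y is an object of M with weights >= n+1-i, then Hom_D(X, Y[i]) = 0. -/

import Mathlib

/-!
If `ι` turns short exact sequences into distinguished triangles, then for any `W` the objects `A`
with `Hom(ι A, W) = 0`, and those with `Hom(W, (ι A)[i]) = 0`, form extension-closed classes in
`M`, since orthogonals in a triangulated category are closed under extensions. Dévissage along
composition series therefore reduces `Hom(ι X, (ι Y)[i]) = 0` to the case of simple `X` and `Y`,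
i.e. to composition factors `S` of `X` and `T` of `Y`; there `wt T ≥ n + 1 - i > wt S - i`, so the
mixedness condition applies.
-/

open CategoryTheory Limits Pretriangulated

universe v u v' u'

/-- `S` is a subquotient of `X` (for `S` simple, this says `S` is a composition factor). -/
def IsSubquotient {C : Type u} [Category.{v} C] (S X : C) : Prop :=
  ∃ (Y : C) (i : Y ⟶ X) (p : Y ⟶ S), Mono i ∧ Epi p

open Opposite ZeroObject

section Devissage

variable {C : Type u} [Category.{v} C] [Abelian C]

lemma isArtinianObject_op {X : C} [IsNoetherianObject X] : IsArtinianObject (op X) :=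
  ⟨(Abelian.subobjectIsoSubobjectOp X).dual.symm.strictMono.wellFoundedLT⟩

lemma simple_unop {X : Cᵒᵖ} [Simple X] : Simple X.unop := by
  refine simple_of_cosimple _ fun f _ => ?_
  rw [← isIso_op_iff, Simple.mono_isIso_iff_nonzero f.op]
  exact Quiver.Hom.op_inj.ne_iff

lemma exists_simple_quotient {X : C} [IsNoetherianObject X] (hX : ¬IsZero X) :
    ∃ (S : C) (e : X ⟶ S), Simple S ∧ Epi e := by
  have := isArtinianObject_op (X := X)
  obtain ⟨S, hS⟩ := exists_simple_subobject (X := op X) fun h => hX h.unop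
  exact ⟨(S : Cᵒᵖ).unop, S.arrow.unop, simple_unop, inferInstance⟩

lemma not_isIso_kernel_ι_of_simple {X S : C} [Simple S] (e : X ⟶ S) [Epi e] :
    ¬IsIso (kernel.ι e) := by
  intro _
  have he : e = 0 := by rw [← cancel_epi (kernel.ι e), kernel.condition, comp_zero]
  exact id_nonzero S (by rw [← cancel_epi e, he, comp_zero, zero_comp])

theorem ObjectProperty.prop_of_forall_simple_isSubquotient (P : ObjectProperty C)
    [P.IsClosedUnderIsomorphisms] [P.ContainsZero] [P.IsClosedUnderExtensions]
    {X : C} [IsNoetherianObject X] [IsArtinianObject X]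
    (h : ∀ S, Simple S → IsSubquotient S X → P S) : P X := by
  suffices ∀ Z : Subobject X, P Z from P.prop_of_isIso (⊤ : Subobject X).arrow (this ⊤)
  intro Z
  induction Z using WellFoundedLT.induction with
  | _ Z ih =>
  by_cases hZ : IsZero (Z : C)
  · exact P.prop_of_isZero hZ
  have := isNoetherianObject_of_mono Z.arrow
  obtain ⟨S, e, hS, he⟩ := exists_simple_quotient hZ
  have hK : P (kernel e) := by
    have hlt : Subobject.mk (kernel.ι e ≫ Z.arrow) < Z := by
      simpa only [Subobject.mk_arrow] using
        Subobject.mk_lt_mk_of_comm (i₁ := kernel.ι e ≫ Z.arrow) (kernel.ι e) rfl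
          (not_isIso_kernel_ι_of_simple e)
    exact P.prop_of_iso (Subobject.underlyingIso _) (ih _ hlt)
  exact P.prop_X₂_of_shortExact (.mk' (ShortComplex.exact_kernel e) inferInstance he) hK
    (h S hS ⟨Z, Z.arrow, e, inferInstance, he⟩)

end Devissage

section Triangulated

variable {D : Type u'} [Category.{v'} D] [HasZeroObject D] [HasShift D ℤ] [Preadditive D]
  [∀ n : ℤ, (shiftFunctor D n).Additive] [Pretriangulated D]

instance ObjectProperty.isTriangulatedClosed₂_shift (P : ObjectProperty D)
    [P.IsTriangulatedClosed₂] [P.IsClosedUnderIsomorphisms] (a : ℤ) :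
    (P.shift a).IsTriangulatedClosed₂ where
  ext₂' T hT h₁ h₃ := (P.shift a).le_isoClosure _
    (P.ext_of_isTriangulatedClosed₂ _ (Triangle.shift_distinguished T hT a) h₁ h₃)

instance ObjectProperty.containsZero_shift (P : ObjectProperty D) [P.ContainsZero]
    [P.IsClosedUnderIsomorphisms] (a : ℤ) : (P.shift a).ContainsZero where
  exists_zero :=
    ⟨0, isZero_zero D, P.prop_of_isZero ((shiftFunctor D a).map_isZero (isZero_zero D))⟩

variable {M : Type u} [Category.{v} M]

lemma ObjectProperty.isClosedUnderExtensions_inverseImage [HasZeroMorphisms M]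
    (P : ObjectProperty D) [P.IsTriangulatedClosed₂] [P.IsClosedUnderIsomorphisms] (F : M ⥤ D)
    (hF : ∀ S : ShortComplex M, S.ShortExact → ∃ δ : F.obj S.X₃ ⟶ (F.obj S.X₁)⟦(1 : ℤ)⟧,
      Triangle.mk (F.map S.f) (F.map S.g) δ ∈ distTriang D) :
    (P.inverseImage F).IsClosedUnderExtensions where
  prop_X₂_of_shortExact hS h₁ h₃ := by
    obtain ⟨δ, hT⟩ := hF _ hS
    exact P.ext_of_isTriangulatedClosed₂ _ hT h₁ h₃

theorem hom_shift_eq_zero_of_forall_simple_isSubquotient [Abelian M]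
    (F : M ⥤ D) [F.PreservesZeroMorphisms]
    (hF : ∀ S : ShortComplex M, S.ShortExact → ∃ δ : F.obj S.X₃ ⟶ (F.obj S.X₁)⟦(1 : ℤ)⟧,
      Triangle.mk (F.map S.f) (F.map S.g) δ ∈ distTriang D)
    {X Y : M} [IsNoetherianObject X] [IsArtinianObject X] [IsNoetherianObject Y]
    [IsArtinianObject Y] (i : ℤ)
    (h : ∀ S T : M, Simple S → Simple T → IsSubquotient S X → IsSubquotient T Y →
      ∀ ψ : F.obj S ⟶ (F.obj T)⟦i⟧, ψ = 0)
    (φ : F.obj X ⟶ (F.obj Y)⟦i⟧) : φ = 0 := by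
  have hext (P : ObjectProperty D) [P.IsTriangulatedClosed₂] [P.IsClosedUnderIsomorphisms] :
      (P.inverseImage F).IsClosedUnderExtensions :=
    ObjectProperty.isClosedUnderExtensions_inverseImage P F hF
  have hX : ∀ T, Simple T → IsSubquotient T Y → ∀ ψ : F.obj X ⟶ (F.obj T)⟦i⟧, ψ = 0 := by
    intro T hT hTY ψ
    let P := (ObjectProperty.singleton ((F.obj T)⟦i⟧)).leftOrthogonal
    have := hext P
    have hPX : P.inverseImage F X :=
      ObjectProperty.prop_of_forall_simple_isSubquotient _ fun S hS hSX => by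
        rintro _ ψ ⟨⟩
        exact h S T hS hT hSX hTY ψ
    exact hPX ψ ⟨()⟩
  let Q := (ObjectProperty.singleton (F.obj X)).rightOrthogonal.shift i
  have := hext Q
  have hQY : Q.inverseImage F Y :=
    ObjectProperty.prop_of_forall_simple_isSubquotient _ fun T hT hTY => by
      rintro _ ψ ⟨⟩
      exact hX T hT hTY ψ
  exact hQY φ ⟨()⟩

end Triangulated

theorem stmt4 {M : Type u} [Category.{v} M] [Abelian M]
    {D : Type u'} [Category.{v'} D] [HasZeroObject D] [HasShift D ℤ] [Preadditive D]
    [∀ n : ℤ, (shiftFunctor D n).Additive] [Pretriangulated D]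
    -- finite length of the heart
    (_finLen : ∀ X : M, IsNoetherianObject X ∧ IsArtinianObject X)
    -- M is the heart of a bounded t-structure on D: the inclusion is fully faithful
    -- and sends short exact sequences to distinguished triangles
    (ι : M ⥤ D) [ι.Full] [ι.Faithful] [ι.Additive]
    (_hheart : ∀ (S : ShortComplex M), S.ShortExact →
      ∃ δ : ι.obj S.X₃ ⟶ (ι.obj S.X₁)⟦(1 : ℤ)⟧,
        Triangle.mk (ι.map S.f) (ι.map S.g) δ ∈ distTriang D)
    (wt : M → ℤ)
    (_hwt : ∀ (L L' : M), Simple L → Simple L' → Nonempty (L ≅ L') → wt L = wt L')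
    -- mixedness of D: Hom^i(L,L') = 0 for simples with wt L' > wt L - i
    (_hmixed : ∀ (L L' : M), Simple L → Simple L' → ∀ i : ℤ, wt L - i < wt L' →
      ∀ φ : ι.obj L ⟶ (ι.obj L')⟦i⟧, φ = 0)
    (n : ℤ) (i : ℤ) (X Y : M)
    -- X has weights ≤ n, Y has weights ≥ n + 1 - i
    (_hX : ∀ S : M, Simple S → IsSubquotient S X → wt S ≤ n)
    (_hY : ∀ S : M, Simple S → IsSubquotient S Y → n + 1 - i ≤ wt S)
    (φ : ι.obj X ⟶ (ι.obj Y)⟦i⟧) :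
    φ = 0 := by
  obtain ⟨_, _⟩ := _finLen X
  obtain ⟨_, _⟩ := _finLen Y
  refine hom_shift_eq_zero_of_forall_simple_isSubquotient ι _hheart i
    (fun S T hS hT hSX hTY => _hmixed S T hS hT i ?_) φ
  linarith [_hX S hS hSX, _hY T hT hTY]
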